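/- For any convex body C in the hyperbolic space H^d and any supporting hyperplane H of C, there exists at least one hyperplane ultraparallel to H that supports C and is at maximal distance from H among all such hyperplanes; hence width_H(C) is well defined. -/

import Mathlib

/- We formalize hyperbolic space `H^d` via the Beltrami–Klein model: the open
unit ball of `ℝ^d`, where hyperbolic geodesic segments are exactly Euclidean
segments (so hyperbolic convexity = Euclidean convexity), hyperplanes are
chords of affine hyperplanes, and the hyperbolic distance is given by the
Cayley–Klein formula `cosh d(x,y) = (1 - ⟪x,y⟫)/√((1-‖x‖²)(1-‖y‖²))`. -/

noncomputable section
open Metric Set RealInnerProductSpace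

namespace Hyp

abbrev E (d : ℕ) := EuclideanSpace ℝ (Fin d)

/-- The Klein model of `H^d`: the open unit ball. -/
def ball01 (d : ℕ) : Set (E d) := Metric.ball 0 1

/-- Inverse hyperbolic cosine. -/
def acosh (z : ℝ) : ℝ := Real.log (z + Real.sqrt (z ^ 2 - 1))

/-- Hyperbolic distance in the Beltrami–Klein model. -/
def hDist {d : ℕ} (x y : E d) : ℝ :=
  acosh ((1 - (inner ℝ x y : ℝ)) / (Real.sqrt (1 - ‖x‖ ^ 2) * Real.sqrt (1 - ‖y‖ ^ 2)))

/-- Hyperbolic diameter of a set. -/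
def hDiam {d : ℕ} (C : Set (E d)) : ℝ :=
  sSup {r | ∃ a ∈ C, ∃ b ∈ C, hDist a b = r}

/-- Hyperbolic (infimal) distance between two sets. -/
def hSetDist {d : ℕ} (A B : Set (E d)) : ℝ :=
  sInf {r | ∃ a ∈ A, ∃ b ∈ B, hDist a b = r}

/-- Hyperbolic distance from a point to a set. -/
def hPointDist {d : ℕ} (x : E d) (A : Set (E d)) : ℝ :=
  sInf {r | ∃ a ∈ A, hDist x a = r}

/-- Closed hyperbolic ball of radius `r` about `x`. -/
def hBall {d : ℕ} (x : E d) (r : ℝ) : Set (E d) :=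
  {y ∈ ball01 d | hDist x y ≤ r}

/-- A convex body in `H^d`: compact, convex (hyperbolically, i.e. in the Klein
model also Euclidean-convex), with nonempty interior, inside the model. -/
def IsBody {d : ℕ} (C : Set (E d)) : Prop :=
  IsCompact C ∧ Convex ℝ C ∧ (interior C).Nonempty ∧ C ⊆ ball01 d

/-- A hyperplane of `H^d` in the Klein model: a chord `{x ∈ B | ⟪u,x⟫ = c}` of
the unit ball, with `‖u‖ = 1` and `|c| < 1` (so the chord is nonempty). -/
structure HPlane (d : ℕ) where
  u : E d
  c : ℝ
  norm_u : ‖u‖ = 1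
  abs_c : |c| < 1

/-- The underlying set of points of a hyperplane. -/
def HPlane.carrier {d : ℕ} (H : HPlane d) : Set (E d) :=
  {x ∈ ball01 d | (inner ℝ H.u x : ℝ) = H.c}

/-- `H` supports `C`: they meet and `C` lies in the closed half-space
`⟪u,·⟫ ≤ c` (an orientation of the normal is chosen accordingly). -/
def Supports {d : ℕ} (H : HPlane d) (C : Set (E d)) : Prop :=
  (H.carrier ∩ C).Nonempty ∧ ∀ x ∈ C, (inner ℝ H.u x : ℝ) ≤ H.c

/-- Two hyperplanes are ultraparallel iff their closures (in `ℝ^d`, hence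
including ideal boundary points) are disjoint. -/
def Ultraparallel {d : ℕ} (H K : HPlane d) : Prop :=
  closure H.carrier ∩ closure K.carrier = ∅

/-- The width of `C` determined by a supporting hyperplane `H`: the distance
from `H` to a farthest ultraparallel supporting hyperplane of `C`. -/
def hwidth {d : ℕ} (C : Set (E d)) (H : HPlane d) : ℝ :=
  sSup {r | ∃ K : HPlane d, Ultraparallel H K ∧ Supports K C ∧
    r = hSetDist H.carrier K.carrier}

/-- Thickness: the minimum width over all supporting hyperplanes. -/
def thickness {d : ℕ} (C : Set (E d)) : ℝ :=
  sInf {r | ∃ H : HPlane d, Supports H C ∧ r = hwidth C H}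

/-- A reduced body. -/
def IsReduced {d : ℕ} (R : Set (E d)) : Prop :=
  IsBody R ∧ ∀ Z : Set (E d), IsBody Z → Z ⊆ R → Z ≠ R → thickness Z < thickness R

/-- The equidistant hypersurface to `H` at distance `t`, on the side
`⟪u,·⟫ < c` (the side on which supported bodies lie). -/
def equiSurf {d : ℕ} (H : HPlane d) (t : ℝ) : Set (E d) :=
  {x ∈ ball01 d | (inner ℝ H.u x : ℝ) < H.c ∧ hPointDist x H.carrier = t}

/-- The distance from `H` to the nearest equidistant hypersurface `E` to `H`
with `C ⊆ conv(H ∪ E)` (the thickness of the equidistant strip `conv(H ∪ E)`). -/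
def equiLevel {d : ℕ} (C : Set (E d)) (H : HPlane d) : ℝ :=
  sInf {t | 0 < t ∧ C ⊆ convexHull ℝ (H.carrier ∪ equiSurf H t)}

/-- `E_H(C)`: the nearest equidistant hypersurface to `H` such that `C` is
contained in the equidistant strip `conv(H ∪ E_H(C))`. -/
def EH {d : ℕ} (C : Set (E d)) (H : HPlane d) : Set (E d) :=
  equiSurf H (equiLevel C H)

/-- A body of constant width `δ`. -/
def ConstWidth {d : ℕ} (C : Set (E d)) (δ : ℝ) : Prop :=
  ∀ H : HPlane d, Supports H C → hwidth C H = δ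

/-- A complete set of diameter `δ`: adding any point of `H^d` outside `C`
strictly increases the diameter. -/
def IsComplete {d : ℕ} (C : Set (E d)) (δ : ℝ) : Prop :=
  hDiam C = δ ∧ ∀ x ∈ ball01 d, x ∉ C → hDiam (insert x C) > δ

/-- The circular arc `P_c(a,b)`: points `g` at hyperbolic distance `δ` from `c`
whose (hyperbolic = Euclidean, in the Klein model) segment to `c` meets the
segment `ab`. -/
def arcP {d : ℕ} (c a b : E d) (δ : ℝ) : Set (E d) :=
  {g ∈ ball01 d | hDist c g = δ ∧ (segment ℝ c g ∩ segment ℝ a b).Nonempty}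

/-! Supporting hyperplanes of `C` are indexed by their unit outer normals `v`, through the
support function. The distance from `H` to the supporting hyperplane with normal `v` is upper
semicontinuous in `v`, so it attains its maximum on the compact sphere of normals. If the
maximizing hyperplane is ultraparallel to `H` we are done. Otherwise it meets `H` inside the
model, or its closure meets that of `H` at an ideal point; either way its distance to `H` is `0`.
Then every supporting hyperplane is at distance `0` from `H`, and the supporting hyperplane
opposite to `H`, ultraparallel to `H` because `C` has interior points, is a farthest one. -/

open Filter Topology

variable {d : ℕ}

lemma continuousAt_arcosh {z : ℝ} (hz : 0 < z) : ContinuousAt Real.arcosh z :=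
  (Real.continuousAt_log (by positivity)).comp (by fun_prop)

def coshDist (x y : E d) : ℝ :=
  (1 - ⟪x, y⟫) / (√(1 - ‖x‖ ^ 2) * √(1 - ‖y‖ ^ 2))

lemma hDist_eq_arcosh_coshDist (x y : E d) : hDist x y = Real.arcosh (coshDist x y) := rfl

lemma mem_ball01 {x : E d} : x ∈ ball01 d ↔ ‖x‖ < 1 := mem_ball_zero_iff

lemma one_le_coshDist {x y : E d} (hx : x ∈ ball01 d) (hy : y ∈ ball01 d) :
    1 ≤ coshDist x y := by
  rw [mem_ball01] at hx hy
  have hx' : 0 < 1 - ‖x‖ ^ 2 := by nlinarith [norm_nonneg x]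
  have hy' : 0 < 1 - ‖y‖ ^ 2 := by nlinarith [norm_nonneg y]
  rw [coshDist, one_le_div (by positivity)]
  have hAMGM : √(1 - ‖x‖ ^ 2) * √(1 - ‖y‖ ^ 2) ≤ ((1 - ‖x‖ ^ 2) + (1 - ‖y‖ ^ 2)) / 2 := by
    nlinarith [sq_nonneg (√(1 - ‖x‖ ^ 2) - √(1 - ‖y‖ ^ 2)), Real.sq_sqrt hx'.le,
      Real.sq_sqrt hy'.le]
  nlinarith [real_inner_le_norm x y, sq_nonneg (‖x‖ - ‖y‖)]

lemma hDist_nonneg {x y : E d} (hx : x ∈ ball01 d) (hy : y ∈ ball01 d) : 0 ≤ hDist x y :=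
  Real.arcosh_nonneg (one_le_coshDist hx hy)

lemma hDist_self {x : E d} (hx : x ∈ ball01 d) : hDist x x = 0 := by
  have : 0 < 1 - ‖x‖ ^ 2 := by nlinarith [norm_nonneg x, mem_ball01.mp hx]
  rw [hDist_eq_arcosh_coshDist, coshDist, real_inner_self_eq_norm_sq, Real.mul_self_sqrt this.le,
    div_self this.ne', Real.arcosh_zero]

lemma continuousAt_hDist_right (x : E d) {y : E d} (hx : x ∈ ball01 d) (hy : y ∈ ball01 d) :
    ContinuousAt (hDist x) y := by
  have hy' : 0 < 1 - ‖y‖ ^ 2 := by nlinarith [norm_nonneg y, mem_ball01.mp hy]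
  have hx' : 0 < 1 - ‖x‖ ^ 2 := by nlinarith [norm_nonneg x, mem_ball01.mp hx]
  refine (continuousAt_arcosh (zero_lt_one.trans_le (one_le_coshDist hx hy))).comp ?_
  exact ContinuousAt.div (by fun_prop) (by fun_prop) (by positivity)

lemma hSetDist_nonneg {A B : Set (E d)} (hA : A ⊆ ball01 d) (hB : B ⊆ ball01 d) :
    0 ≤ hSetDist A B :=
  Real.sInf_nonneg <| by rintro r ⟨a, ha, b, hb, rfl⟩; exact hDist_nonneg (hA ha) (hB hb)

lemma hSetDist_le_hDist {A B : Set (E d)} (hA : A ⊆ ball01 d) (hB : B ⊆ ball01 d)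
    {a b : E d} (ha : a ∈ A) (hb : b ∈ B) : hSetDist A B ≤ hDist a b :=
  csInf_le ⟨0, by rintro r ⟨a, ha, b, hb, rfl⟩; exact hDist_nonneg (hA ha) (hB hb)⟩
    ⟨a, ha, b, hb, rfl⟩

lemma exists_hDist_lt_of_hSetDist_lt {A B : Set (E d)} (hA : A.Nonempty) (hB : B.Nonempty)
    {r : ℝ} (h : hSetDist A B < r) : ∃ a ∈ A, ∃ b ∈ B, hDist a b < r := by
  obtain ⟨a, ha⟩ := hA
  obtain ⟨b, hb⟩ := hB
  obtain ⟨_, ⟨a, ha, b, hb, rfl⟩, hlt⟩ :=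
    exists_lt_of_csInf_lt (s := {r | ∃ a ∈ A, ∃ b ∈ B, hDist a b = r}) ⟨_, a, ha, b, hb, rfl⟩ h
  exact ⟨a, ha, b, hb, hlt⟩

namespace HPlane

variable (H : HPlane d)

lemma carrier_subset_ball01 : H.carrier ⊆ ball01 d := sep_subset _ _

lemma mem_carrier {x : E d} : x ∈ H.carrier ↔ ‖x‖ < 1 ∧ ⟪H.u, x⟫ = H.c := by
  rw [carrier, mem_sep_iff, mem_ball01]

lemma closure_carrier_subset : closure H.carrier ⊆ {x | ‖x‖ ≤ 1 ∧ ⟪H.u, x⟫ = H.c} :=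
  closure_minimal (fun _ hx => ⟨((H.mem_carrier).1 hx).1.le, ((H.mem_carrier).1 hx).2⟩) <|
    (isClosed_le continuous_norm continuous_const).inter
      (isClosed_eq (continuous_const.inner continuous_id) continuous_const)

lemma add_smul_sub_center_mem_carrier {x : E d} (hx : ‖x‖ ≤ 1) (hux : ⟪H.u, x⟫ = H.c)
    {s : ℝ} (hs₀ : 0 < s) (hs₁ : s ≤ 1) : x + s • (H.c • H.u - x) ∈ H.carrier := by
  have hconv : x + s • (H.c • H.u - x) = (1 - s) • x + s • (H.c • H.u) := by
    rw [smul_sub, sub_smul, one_smul]; abel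
  refine H.mem_carrier.2 ⟨?_, ?_⟩
  · calc ‖x + s • (H.c • H.u - x)‖ ≤ (1 - s) * ‖x‖ + s * |H.c| := by
          rw [hconv]
          refine (norm_add_le _ _).trans_eq ?_
          rw [norm_smul, norm_smul, norm_smul, H.norm_u, Real.norm_of_nonneg (by linarith),
            Real.norm_of_nonneg hs₀.le, Real.norm_eq_abs, mul_one]
      _ < 1 := by nlinarith [H.abs_c]
  · rw [inner_add_right, inner_smul_right, inner_sub_right, inner_smul_right,
      real_inner_self_eq_norm_sq, H.norm_u, hux]
    ring

lemma center_mem_carrier : H.c • H.u ∈ H.carrier := by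
  refine H.mem_carrier.2 ⟨?_, ?_⟩
  · rw [norm_smul, Real.norm_eq_abs, H.norm_u, mul_one]; exact H.abs_c
  · rw [real_inner_smul_right, real_inner_self_eq_norm_sq, H.norm_u]; ring

end HPlane

lemma one_sub_norm_add_smul_sq {x m : E d} {α : ℝ} (hx : ‖x‖ = 1) (hm : ⟪x, m⟫ = -α) (t : ℝ) :
    1 - ‖x + t • m‖ ^ 2 = t * (2 * α - t * ‖m‖ ^ 2) := by
  rw [norm_add_sq_real, real_inner_smul_right, hm, norm_smul, Real.norm_eq_abs, mul_pow, sq_abs,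
    hx]
  ring

lemma tendsto_coshDist_of_norm_eq_one {x m n : E d} {α : ℝ} (hx : ‖x‖ = 1) (hα : 0 < α)
    (hm : ⟪x, m⟫ = -α) (hn : ⟪x, n⟫ = -α) :
    Tendsto (fun t : ℝ => coshDist (x + t • m) (x + t • n)) (𝓝[>] 0) (𝓝 1) := by
  set g : ℝ → ℝ := fun t => (2 * α - t * ⟪m, n⟫) /
    (√(2 * α - t * ‖m‖ ^ 2) * √(2 * α - t * ‖n‖ ^ 2))
  have hg : ContinuousAt g 0 :=
    ContinuousAt.div (by fun_prop) (by fun_prop) (by simp only [zero_mul, sub_zero]; positivity)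
  have hg₀ : g 0 = 1 := by
    simp only [g, zero_mul, sub_zero, Real.mul_self_sqrt (by positivity : (0 : ℝ) ≤ 2 * α)]
    exact div_self (by positivity)
  have hcosh : ∀ t > (0 : ℝ), coshDist (x + t • m) (x + t • n) = g t := by
    intro t ht
    have hmn : 1 - ⟪x + t • m, x + t • n⟫ = t * (2 * α - t * ⟪m, n⟫) := by
      rw [inner_add_left, inner_add_right, inner_add_right, real_inner_smul_left,
        real_inner_smul_left, real_inner_smul_right, real_inner_smul_right,
        real_inner_self_eq_norm_sq, hx, real_inner_comm x m, hm, hn]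
      ring
    rw [coshDist, hmn, one_sub_norm_add_smul_sq hx hm, one_sub_norm_add_smul_sq hx hn,
      Real.sqrt_mul ht.le, Real.sqrt_mul ht.le, mul_mul_mul_comm, Real.mul_self_sqrt ht.le]
    exact mul_div_mul_left _ _ ht.ne'
  rw [← hg₀]
  exact (hg.tendsto.mono_left nhdsWithin_le_nhds).congr'
    (eventually_nhdsWithin_of_forall fun t ht => (hcosh t ht).symm)

lemma hSetDist_le_zero_of_common_ideal_point (H K : HPlane d) {x : E d} (hx : ‖x‖ = 1)
    (hH : ⟪H.u, x⟫ = H.c) (hK : ⟪K.u, x⟫ = K.c) : hSetDist H.carrier K.carrier ≤ 0 := by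
  have inner_sub_center (P : HPlane d) (hP : ⟪P.u, x⟫ = P.c) :
      ⟪x, P.c • P.u - x⟫ = -(1 - P.c ^ 2) := by
    rw [inner_sub_right, real_inner_smul_right, real_inner_comm, hP, real_inner_self_eq_norm_sq,
      hx]
    ring
  have one_sub_sq_pos (P : HPlane d) : 0 < 1 - P.c ^ 2 := by
    nlinarith [abs_lt.mp P.abs_c]
  -- rescale the chord of `K` so that both chords leave `x` at the same Euclidean rate
  set σ := (1 - H.c ^ 2) / (1 - K.c ^ 2)
  have hσ : 0 < σ := div_pos (one_sub_sq_pos H) (one_sub_sq_pos K)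
  have hn : ⟪x, σ • (K.c • K.u - x)⟫ = -(1 - H.c ^ 2) := by
    rw [real_inner_smul_right, inner_sub_center K hK, mul_neg,
      div_mul_cancel₀ _ (one_sub_sq_pos K).ne']
  have hdist : Tendsto (fun t : ℝ => hDist (x + t • (H.c • H.u - x)) (x + t • σ • (K.c • K.u - x)))
      (𝓝[>] 0) (𝓝 0) := by
    simpa only [hDist_eq_arcosh_coshDist, Real.arcosh_zero, Function.comp_def] using
      (continuousAt_arcosh one_pos).tendsto.comp
        (tendsto_coshDist_of_norm_eq_one hx (one_sub_sq_pos H) (inner_sub_center H hH) hn)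
  refine ge_of_tendsto hdist ?_
  filter_upwards [Ioo_mem_nhdsGT (lt_min one_pos (inv_pos.2 hσ))] with t ⟨ht₀, ht⟩
  refine hSetDist_le_hDist H.carrier_subset_ball01 K.carrier_subset_ball01
    (H.add_smul_sub_center_mem_carrier hx.le hH ht₀ (ht.trans_le (min_le_left _ _)).le) ?_
  rw [smul_smul]
  refine K.add_smul_sub_center_mem_carrier hx.le hK (mul_pos ht₀ hσ) ?_
  simpa [hσ.ne'] using (mul_lt_mul_of_pos_right (ht.trans_le (min_le_right _ _)) hσ).le

lemma hSetDist_eq_zero_of_not_ultraparallel {H K : HPlane d} (h : ¬ Ultraparallel H K) :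
    hSetDist H.carrier K.carrier = 0 := by
  refine le_antisymm ?_ (hSetDist_nonneg H.carrier_subset_ball01 K.carrier_subset_ball01)
  obtain ⟨x, hxH, hxK⟩ := nonempty_iff_ne_empty.2 h
  obtain ⟨hx₁, hH⟩ := H.closure_carrier_subset hxH
  obtain ⟨-, hK⟩ := K.closure_carrier_subset hxK
  rcases hx₁.lt_or_eq with hx | hx
  · calc hSetDist H.carrier K.carrier
        ≤ hDist x x := hSetDist_le_hDist H.carrier_subset_ball01 K.carrier_subset_ball01
          (H.mem_carrier.2 ⟨hx, hH⟩) (K.mem_carrier.2 ⟨hx, hK⟩)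
      _ = 0 := hDist_self (mem_ball01.2 hx)
  · exact hSetDist_le_zero_of_common_ideal_point H K hx hH hK

def supportFn (C : Set (E d)) (v : E d) : ℝ := sSup ((fun x => ⟪v, x⟫) '' C)

section supportFn

variable {C : Set (E d)}

lemma le_supportFn (hC : IsCompact C) (v : E d) {x : E d} (hx : x ∈ C) :
    ⟪v, x⟫ ≤ supportFn C v :=
  le_csSup (hC.bddAbove_image (by fun_prop)) (mem_image_of_mem _ hx)

lemma supportFn_le (hne : C.Nonempty) {v : E d} {r : ℝ} (h : ∀ x ∈ C, ⟪v, x⟫ ≤ r) :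
    supportFn C v ≤ r :=
  csSup_le (hne.image _) (forall_mem_image.2 h)

lemma exists_inner_eq_supportFn (hC : IsCompact C) (hne : C.Nonempty) (v : E d) :
    ∃ x ∈ C, ⟪v, x⟫ = supportFn C v := by
  obtain ⟨x, hx, hmax⟩ := hC.exists_isMaxOn hne (f := fun x => ⟪v, x⟫) (by fun_prop)
  exact ⟨x, hx, le_antisymm (le_supportFn hC v hx) (supportFn_le hne hmax)⟩

lemma continuous_supportFn (hC : IsCompact C) : Continuous (supportFn C) :=
  hC.continuous_sSup (f := fun v x => ⟪v, x⟫) continuous_inner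

end supportFn

namespace IsBody

variable {C : Set (E d)} (hC : IsBody C)
include hC

lemma nonempty : C.Nonempty := hC.2.2.1.mono interior_subset

lemma abs_supportFn_lt_one {v : E d} (hv : ‖v‖ = 1) : |supportFn C v| < 1 := by
  obtain ⟨x, hx, hxv⟩ := exists_inner_eq_supportFn hC.1 hC.nonempty v
  calc |supportFn C v| = |⟪v, x⟫| := by rw [hxv]
    _ ≤ ‖v‖ * ‖x‖ := abs_real_inner_le_norm v x
    _ < 1 := by rw [hv, one_mul]; exact mem_ball01.1 (hC.2.2.2 hx)

def supportPlane (v : E d) (hv : ‖v‖ = 1) : HPlane d :=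
  ⟨v, supportFn C v, hv, hC.abs_supportFn_lt_one hv⟩

lemma supports_supportPlane (v : E d) (hv : ‖v‖ = 1) : Supports (hC.supportPlane v hv) C := by
  obtain ⟨x, hx, hxv⟩ := exists_inner_eq_supportFn hC.1 hC.nonempty v
  exact ⟨⟨x, (HPlane.mem_carrier _).2 ⟨mem_ball01.1 (hC.2.2.2 hx), hxv⟩, hx⟩,
    fun y hy => le_supportFn hC.1 v hy⟩

lemma eq_supportPlane_of_supports {K : HPlane d} (hK : Supports K C) :
    K = hC.supportPlane K.u K.norm_u := by
  obtain ⟨⟨x, hxK, hx⟩, hle⟩ := hK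
  obtain ⟨u, c, hu, hc⟩ := K
  obtain rfl : c = supportFn C u := le_antisymm
    (((HPlane.mem_carrier _).1 hxK).2.symm.trans_le (le_supportFn hC.1 u hx))
    (supportFn_le hC.nonempty hle)
  rfl

lemma neg_supportFn_neg_lt {v : E d} (hv : v ≠ 0) : -supportFn C (-v) < supportFn C v := by
  obtain ⟨p, hp⟩ := hC.2.2.1
  have hline : Tendsto (fun s : ℝ => p - s • v) (𝓝 0) (𝓝 p) := by
    simpa using (show Continuous fun s : ℝ => p - s • v by fun_prop).tendsto 0
  obtain ⟨s, hsC, hs⟩ := (((hline.mono_left nhdsWithin_le_nhds).eventually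
    (mem_interior_iff_mem_nhds.1 hp)).and (self_mem_nhdsWithin (s := Ioi 0))).exists
  have hsv : 0 < s * ‖v‖ ^ 2 := mul_pos hs (by positivity)
  calc -supportFn C (-v) ≤ ⟪v, p - s • v⟫ := by
        have := le_supportFn hC.1 (-v) hsC
        rw [inner_neg_left] at this
        linarith
    _ = ⟪v, p⟫ - s * ‖v‖ ^ 2 := by
        rw [inner_sub_right, real_inner_smul_right, real_inner_self_eq_norm_sq]
    _ < supportFn C v := by linarith [le_supportFn hC.1 v (interior_subset hp)]

lemma ultraparallel_supportPlane_neg {H : HPlane d} (hH : Supports H C) :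
    Ultraparallel H (hC.supportPlane (-H.u) (by rw [norm_neg, H.norm_u])) := by
  refine eq_empty_iff_forall_notMem.2 fun x ⟨hxH, hxK⟩ => ?_
  have hH' : ⟪H.u, x⟫ = H.c := (H.closure_carrier_subset hxH).2
  have hK' : ⟪-H.u, x⟫ = supportFn C (-H.u) := (HPlane.closure_carrier_subset _ hxK).2
  rw [inner_neg_left] at hK'
  have hwidth := hC.neg_supportFn_neg_lt (v := H.u) (norm_ne_zero_iff.1 (by simp [H.norm_u]))
  linarith [supportFn_le hC.nonempty hH.2]

lemma upperSemicontinuous_hSetDist_supportPlane {A : Set (E d)} (hA : A ⊆ ball01 d)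
    (hAne : A.Nonempty) :
    UpperSemicontinuous fun v : sphere (0 : E d) 1 =>
      hSetDist A (hC.supportPlane v (norm_eq_of_mem_sphere v)).carrier := by
  intro v r hr
  obtain ⟨a, ha, b, hb, hab⟩ :=
    exists_hDist_lt_of_hSetDist_lt hAne ⟨_, HPlane.center_mem_carrier _⟩ hr
  obtain ⟨hb₁, hbv⟩ := (HPlane.mem_carrier _).1 hb
  change ⟪(v : E d), b⟫ = supportFn C v at hbv
  -- move `b` along the normal onto the supporting hyperplanes with nearby normals
  set proj : sphere (0 : E d) 1 → E d := fun w => b + (supportFn C w - ⟪(w : E d), b⟫) • (w : E d)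
  have hproj : Tendsto proj (𝓝 v) (𝓝 b) := by
    have hcont : Continuous proj := by have := continuous_supportFn hC.1; fun_prop
    simpa [proj, hbv] using hcont.tendsto v
  have hnear : ∀ᶠ w in 𝓝 v, ‖proj w‖ < 1 ∧ hDist a (proj w) < r :=
    (hproj.norm.eventually (gt_mem_nhds hb₁)).and
      (((continuousAt_hDist_right a (hA ha) (mem_ball01.2 hb₁)).tendsto.comp hproj).eventually
        (gt_mem_nhds hab))
  filter_upwards [hnear] with w ⟨hw₁, hwr⟩
  refine (hSetDist_le_hDist hA (HPlane.carrier_subset_ball01 _) ha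
    ((HPlane.mem_carrier _).2 ⟨hw₁, ?_⟩)).trans_lt hwr
  simp only [supportPlane, proj, inner_add_right, real_inner_smul_right,
    real_inner_self_eq_norm_sq, norm_eq_of_mem_sphere]
  ring

end IsBody

/-- For any convex body `C` and supporting hyperplane `H` there is a
farthest ultraparallel supporting hyperplane of `C`; hence `width_H(C)` is
well defined. -/
theorem exists_farthest_ultraparallel_supporting {d : ℕ} (C : Set (E d))
    (hC : IsBody C) (H : HPlane d) (hH : Supports H C) :
    ∃ K : HPlane d, Ultraparallel H K ∧ Supports K C ∧
      ∀ K' : HPlane d, Ultraparallel H K' → Supports K' C →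
        hSetDist H.carrier K'.carrier ≤ hSetDist H.carrier K.carrier := by
  obtain ⟨v, -, hv⟩ := ((hC.upperSemicontinuous_hSetDist_supportPlane H.carrier_subset_ball01
    ⟨_, H.center_mem_carrier⟩).upperSemicontinuousOn univ).exists_isMaxOn
      ⟨⟨H.u, mem_sphere_zero_iff_norm.2 H.norm_u⟩, mem_univ _⟩ isCompact_univ
  have hv_max (K : HPlane d) (hK : Supports K C) : hSetDist H.carrier K.carrier ≤
      hSetDist H.carrier (hC.supportPlane v (norm_eq_of_mem_sphere v)).carrier := by
    calc hSetDist H.carrier K.carrier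
        = hSetDist H.carrier (hC.supportPlane K.u K.norm_u).carrier :=
          congrArg (fun P : HPlane d => hSetDist H.carrier P.carrier)
            (hC.eq_supportPlane_of_supports hK)
      _ ≤ _ := isMaxOn_iff.1 hv ⟨K.u, mem_sphere_zero_iff_norm.2 K.norm_u⟩ (mem_univ _)
  by_cases hvH : Ultraparallel H (hC.supportPlane v (norm_eq_of_mem_sphere v))
  · exact ⟨_, hvH, hC.supports_supportPlane _ _, fun K' _ hK' => hv_max K' hK'⟩
  · refine ⟨_, hC.ultraparallel_supportPlane_neg hH, hC.supports_supportPlane _ _,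
      fun K' _ hK' => ?_⟩
    calc hSetDist H.carrier K'.carrier ≤ 0 :=
          (hv_max K' hK').trans (hSetDist_eq_zero_of_not_ultraparallel hvH).le
      _ ≤ _ := hSetDist_nonneg H.carrier_subset_ball01 (HPlane.carrier_subset_ball01 _)

end Hyp
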